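/- Let Q: [0,∞) → [0,∞) be measurable with Q(0) = 0, and for r ≥ 0 define Φ(r) := inf { ∫_{ℝ³} ( (1/2)|v|² g(v) + Q(g(v)) ) dv : g ∈ L¹(ℝ³), g ≥ 0, the integral is finite, ∫ g dv = r }. For f ∈ L¹(ℝ⁶) with f ≥ 0, ∫∫ f dv dx = M and ∫∫ ((1/2)|v|² f + Q(f)) dv dx < ∞, let ρ_f(x) := ∫ f(x,v) dv be the induced spatial density, and define the energy–Casimir functional H_C(f) := ∫∫ Q(f(x,v)) dv dx + (1/2)∫∫ |v|² f(x,v) dv dx − (1/2)∫∫ ρ_f(x)ρ_f(y)/|x−y| dx dy and the reduced functional H_r(ρ) := ∫ Φ(ρ(x)) dx − (1/2)∫∫ ρ(x)ρ(y)/|x−y| dx dy. Then H_C(f) ≥ H_r(ρ_f). -/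
import Mathlib


open MeasureTheory

noncomputable section

/-- Physical space `ℝ³`. -/
abbrev Space := EuclideanSpace ℝ (Fin 3)

/-- The spatial density `ρ_f(x) = ∫ f(x,v) dv` induced by a phase-space density `f`. -/
def rhoInduced (f : Space × Space → ℝ) (x : Space) : ℝ := ∫ v, f (x, v)

/-- `Φ(r)` is the infimum of `∫ ((1/2)|v|²g(v) + Q(g(v))) dv` over all admissible
`g ∈ L¹(ℝ³)`, `g ≥ 0`, with finite integrand and `∫ g = r`. -/
def PhiQ (Q : ℝ → ℝ) (r : ℝ) : ℝ :=
  sInf { e : ℝ | ∃ g : Space → ℝ, Integrable g ∧ (∀ v, 0 ≤ g v) ∧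
    Integrable (fun v => (1/2) * ‖v‖^2 * g v + Q (g v)) ∧ (∫ v, g v) = r ∧
    e = ∫ v, ((1/2) * ‖v‖^2 * g v + Q (g v)) }

/-- The energy–Casimir functional
`H_C(f) = ∫∫ Q(f) + (1/2)∫∫ |v|²f − (1/2)∫∫ ρ_f(x)ρ_f(y)/|x−y|`. -/
def HC (Q : ℝ → ℝ) (f : Space × Space → ℝ) : ℝ :=
  (∫ p, Q (f p)) + (1/2) * (∫ p : Space × Space, ‖p.2‖^2 * f p)
    - (1/2) * ∫ x, ∫ y, rhoInduced f x * rhoInduced f y / ‖x - y‖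

/-- The reduced functional `H_r(ρ) = ∫ Φ(ρ) − (1/2)∫∫ ρ(x)ρ(y)/|x−y|`. -/
def HrRed (Φ : ℝ → ℝ) (ρ : Space → ℝ) : ℝ :=
  (∫ x, Φ (ρ x)) - (1/2) * ∫ x, ∫ y, ρ x * ρ y / ‖x - y‖

/-- for any measurable `Q ≥ 0` with `Q(0) = 0` and any phase-space density
`f ≥ 0` with mass `M` and finite Casimir and kinetic energies, the energy–Casimir
functional dominates the reduced functional of the induced spatial density:
`H_C(f) ≥ H_r(ρ_f)`. -/
theorem statement19 (Q : ℝ → ℝ) (hQm : Measurable Q) (hQ0 : Q 0 = 0)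
    (hQpos : ∀ s : ℝ, 0 ≤ Q s) (M : ℝ)
    (f : Space × Space → ℝ) (hf : Integrable f) (hfpos : ∀ p, 0 ≤ f p)
    (hmass : (∫ p, f p) = M)
    (hQf : Integrable (fun p => Q (f p)))
    (hkin : Integrable (fun p : Space × Space => ‖p.2‖^2 * f p)) :
    HrRed (PhiQ Q) (rhoInduced f) ≤ HC Q f := by
  -- the interaction terms are identical, so it suffices to compare the first terms
  have key : (∫ x, PhiQ Q (rhoInduced f x))
      ≤ (∫ p, Q (f p)) + (1/2) * (∫ p : Space × Space, ‖p.2‖^2 * f p) := by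
    -- combine the RHS into a single integral
    set G : Space × Space → ℝ := fun p => (1/2) * ‖p.2‖^2 * f p + Q (f p) with hG
    have hGint : Integrable G := by
      have h1 : Integrable (fun p : Space × Space => (1/2) * (‖p.2‖^2 * f p)) :=
        hkin.const_mul (1/2)
      have : Integrable (fun p : Space × Space => (1/2) * (‖p.2‖^2 * f p) + Q (f p)) :=
        h1.add hQf
      refine this.congr (Filter.Eventually.of_forall fun p => ?_)
      simp [hG, mul_assoc]
    have hRHS : (∫ p, Q (f p)) + (1/2) * (∫ p : Space × Space, ‖p.2‖^2 * f p)
        = ∫ p, G p := by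
      rw [← integral_const_mul, ← integral_add hQf (hkin.const_mul (1/2))]
      congr 1
      ext p
      simp [hG, mul_assoc]
      ring
    rw [hRHS]
    -- Fubini: integrability of the prod-measure versions
    have hGint' : Integrable G (volume.prod volume) := by
      rwa [← Measure.volume_eq_prod]
    have hfint' : Integrable f (volume.prod volume) := by
      rwa [← Measure.volume_eq_prod]
    have hFub : (∫ p, G p) = ∫ x, ∫ v, G (x, v) := by
      rw [Measure.volume_eq_prod, MeasureTheory.integral_prod _ hGint']
    rw [hFub]
    -- the inner integral as a function of x is integrable
    have hFint : Integrable (fun x => ∫ v, G (x, v)) := hGint'.integral_prod_left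
    -- pointwise comparison a.e.
    refine integral_mono_of_nonneg ?_ hFint ?_
    · refine Filter.Eventually.of_forall fun x => ?_
      unfold PhiQ
      refine Real.sInf_nonneg fun e he => ?_
      obtain ⟨g, hg1, hg2, hg3, hg4, rfl⟩ := he
      refine integral_nonneg fun v => ?_
      have := hg2 v
      have := hQpos (g v)
      positivity
    · have hGslice : ∀ᵐ x, Integrable (fun v => G (x, v)) := hGint'.prod_right_ae
      have hfslice : ∀ᵐ x, Integrable (fun v => f (x, v)) := hfint'.prod_right_ae
      filter_upwards [hGslice, hfslice] with x hGx hfx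
      unfold PhiQ
      have hbdd : BddBelow { e : ℝ | ∃ g : Space → ℝ, Integrable g ∧ (∀ v, 0 ≤ g v) ∧
          Integrable (fun v => (1/2) * ‖v‖^2 * g v + Q (g v)) ∧
          (∫ v, g v) = rhoInduced f x ∧
          e = ∫ v, ((1/2) * ‖v‖^2 * g v + Q (g v)) } := by
        refine ⟨0, fun e he => ?_⟩
        obtain ⟨g, hg1, hg2, hg3, hg4, rfl⟩ := he
        refine integral_nonneg fun v => ?_
        have := hg2 v
        have := hQpos (g v)
        positivity
      refine csInf_le hbdd ?_
      exact ⟨fun v => f (x, v), hfx, fun v => hfpos (x, v), hGx, rfl, rfl⟩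
  unfold HrRed HC
  linarith
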